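/- arXiv:1407.3011 — 3 statements merged into one kernel-verified Lean document; each statement's English description precedes it below -/
import Mathlib

section
/- Let D ⊆ ℝ³ be open with coordinates (x, y, z) and let S : D → ℝ be a smooth solution of the system ∂_x∂_z S = e^S ∂_x S and ∂_y∂_z S = e^S ∂_y S. Then the function u := ∂_z S + e^S is a solution of the over-determined system ∂_x∂_z u = u ∂_x u and ∂_y∂_z u = u ∂_y u on D. -/
noncomputable section

open Real

/-- Partial derivative with respect to the first variable `x`. -/
def pdx (f : ℝ → ℝ → ℝ → ℝ) (x y z : ℝ) : ℝ := deriv (fun t => f t y z) x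

/-- Partial derivative with respect to the second variable `y`. -/
def pdy (f : ℝ → ℝ → ℝ → ℝ) (x y z : ℝ) : ℝ := deriv (fun t => f x t z) y

/-- Partial derivative with respect to the third variable `z`. -/
def pdz (f : ℝ → ℝ → ℝ → ℝ) (x y z : ℝ) : ℝ := deriv (fun t => f x y t) z

section Aux

lemma smoothOn_diffAt {F' : Type*} [NormedAddCommGroup F'] [NormedSpace ℝ F']
    {Dset : Set (ℝ × ℝ × ℝ)} (hD : IsOpen Dset) {f : (ℝ × ℝ × ℝ) → F'}
    (hf : ContDiffOn ℝ (⊤ : ℕ∞) f Dset) {p : ℝ × ℝ × ℝ} (hp : p ∈ Dset) :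
    DifferentiableAt ℝ f p :=
  (hf.differentiableOn (by simp)).differentiableAt (hD.mem_nhds hp)

lemma rep_x {Dset : Set (ℝ × ℝ × ℝ)} (hD : IsOpen Dset) (f : ℝ → ℝ → ℝ → ℝ)
    (G : (ℝ × ℝ × ℝ) → ℝ) (hfG : ∀ q ∈ Dset, f q.1 q.2.1 q.2.2 = G q)
    {p : ℝ × ℝ × ℝ} (hp : p ∈ Dset) (hG : DifferentiableAt ℝ G p) :
    pdx f p.1 p.2.1 p.2.2 = fderiv ℝ G p (1, 0, 0) := by
  obtain ⟨x, y, z⟩ := p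
  have hL : HasDerivAt (fun t : ℝ => ((t, y, z) : ℝ × ℝ × ℝ)) ((1 : ℝ), (0 : ℝ), (0 : ℝ)) x :=
    HasDerivAt.prodMk (hasDerivAt_id x) (hasDerivAt_const x (y, z))
  have hmem : ∀ᶠ t in nhds x, ((t, y, z) : ℝ × ℝ × ℝ) ∈ Dset :=
    hL.continuousAt.preimage_mem_nhds (hD.mem_nhds hp)
  have hev : (fun t => f t y z) =ᶠ[nhds x] (fun t => G (t, y, z)) :=
    hmem.mono (fun t ht => hfG _ ht)
  have hcomp : HasDerivAt (fun t : ℝ => G (t, y, z)) (fderiv ℝ G (x, y, z) (1, 0, 0)) x :=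
    hG.hasFDerivAt.comp_hasDerivAt x hL
  unfold pdx
  rw [hev.deriv_eq, hcomp.deriv]

lemma rep_y {Dset : Set (ℝ × ℝ × ℝ)} (hD : IsOpen Dset) (f : ℝ → ℝ → ℝ → ℝ)
    (G : (ℝ × ℝ × ℝ) → ℝ) (hfG : ∀ q ∈ Dset, f q.1 q.2.1 q.2.2 = G q)
    {p : ℝ × ℝ × ℝ} (hp : p ∈ Dset) (hG : DifferentiableAt ℝ G p) :
    pdy f p.1 p.2.1 p.2.2 = fderiv ℝ G p (0, 1, 0) := by
  obtain ⟨x, y, z⟩ := p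
  have hL : HasDerivAt (fun t : ℝ => ((x, t, z) : ℝ × ℝ × ℝ)) ((0 : ℝ), (1 : ℝ), (0 : ℝ)) y :=
    HasDerivAt.prodMk (hasDerivAt_const y x) (HasDerivAt.prodMk (hasDerivAt_id y) (hasDerivAt_const y z))
  have hmem : ∀ᶠ t in nhds y, ((x, t, z) : ℝ × ℝ × ℝ) ∈ Dset :=
    hL.continuousAt.preimage_mem_nhds (hD.mem_nhds hp)
  have hev : (fun t => f x t z) =ᶠ[nhds y] (fun t => G (x, t, z)) :=
    hmem.mono (fun t ht => hfG _ ht)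
  have hcomp : HasDerivAt (fun t : ℝ => G (x, t, z)) (fderiv ℝ G (x, y, z) (0, 1, 0)) y :=
    hG.hasFDerivAt.comp_hasDerivAt y hL
  unfold pdy
  rw [hev.deriv_eq, hcomp.deriv]

lemma rep_z {Dset : Set (ℝ × ℝ × ℝ)} (hD : IsOpen Dset) (f : ℝ → ℝ → ℝ → ℝ)
    (G : (ℝ × ℝ × ℝ) → ℝ) (hfG : ∀ q ∈ Dset, f q.1 q.2.1 q.2.2 = G q)
    {p : ℝ × ℝ × ℝ} (hp : p ∈ Dset) (hG : DifferentiableAt ℝ G p) :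
    pdz f p.1 p.2.1 p.2.2 = fderiv ℝ G p (0, 0, 1) := by
  obtain ⟨x, y, z⟩ := p
  have hL : HasDerivAt (fun t : ℝ => ((x, y, t) : ℝ × ℝ × ℝ)) ((0 : ℝ), (0 : ℝ), (1 : ℝ)) z :=
    HasDerivAt.prodMk (hasDerivAt_const z x) (HasDerivAt.prodMk (hasDerivAt_const z y) (hasDerivAt_id z))
  have hmem : ∀ᶠ t in nhds z, ((x, y, t) : ℝ × ℝ × ℝ) ∈ Dset :=
    hL.continuousAt.preimage_mem_nhds (hD.mem_nhds hp)
  have hev : (fun t => f x y t) =ᶠ[nhds z] (fun t => G (x, y, t)) :=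
    hmem.mono (fun t ht => hfG _ ht)
  have hcomp : HasDerivAt (fun t : ℝ => G (x, y, t)) (fderiv ℝ G (x, y, z) (0, 0, 1)) z :=
    hG.hasFDerivAt.comp_hasDerivAt z hL
  unfold pdz
  rw [hev.deriv_eq, hcomp.deriv]

lemma fderiv_clm_apply_const {c : (ℝ × ℝ × ℝ) → (ℝ × ℝ × ℝ) →L[ℝ] ℝ} {p w₀ w : ℝ × ℝ × ℝ}
    (hc : DifferentiableAt ℝ c p) :
    fderiv ℝ (fun q => c q w₀) p w = fderiv ℝ c p w w₀ := by
  rw [fderiv_clm_apply hc (differentiableAt_const _)]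
  simp

/-- The core computation, uniform in the direction `v` (used for `x` and `y`). -/
lemma backlund_key {Dset : Set (ℝ × ℝ × ℝ)} (hD : IsOpen Dset) (S : ℝ → ℝ → ℝ → ℝ)
    (hS : ContDiffOn ℝ (⊤ : ℕ∞) (fun p : ℝ × ℝ × ℝ => S p.1 p.2.1 p.2.2) Dset)
    (v : ℝ × ℝ × ℝ) (pdv : (ℝ → ℝ → ℝ → ℝ) → ℝ → ℝ → ℝ → ℝ)
    (hrep : ∀ (f : ℝ → ℝ → ℝ → ℝ) (G : (ℝ × ℝ × ℝ) → ℝ),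
      (∀ q ∈ Dset, f q.1 q.2.1 q.2.2 = G q) →
      ∀ p ∈ Dset, DifferentiableAt ℝ G p → pdv f p.1 p.2.1 p.2.2 = fderiv ℝ G p v)
    (heq : ∀ p ∈ Dset, pdv (pdz S) p.1 p.2.1 p.2.2
        = Real.exp (S p.1 p.2.1 p.2.2) * pdv S p.1 p.2.1 p.2.2)
    (u : ℝ → ℝ → ℝ → ℝ)
    (hu : u = fun x y z => pdz S x y z + Real.exp (S x y z)) :
    ∀ p ∈ Dset, pdv (pdz u) p.1 p.2.1 p.2.2
        = u p.1 p.2.1 p.2.2 * pdv u p.1 p.2.1 p.2.2 := by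
  set F : (ℝ × ℝ × ℝ) → ℝ := fun q => S q.1 q.2.1 q.2.2 with hFdef
  set G : (ℝ × ℝ × ℝ) → ℝ := fun q => fderiv ℝ F q (0, 0, 1) with hGdef
  set U : (ℝ × ℝ × ℝ) → ℝ := fun q => G q + Real.exp (F q) with hUdef
  have hFs : ContDiffOn ℝ (⊤ : ℕ∞) F Dset := hS
  have hF' : ContDiffOn ℝ (⊤ : ℕ∞) (fderiv ℝ F) Dset := hFs.fderiv_of_isOpen hD (by simp)
  have hGs : ContDiffOn ℝ (⊤ : ℕ∞) G Dset := hF'.clm_apply contDiffOn_const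
  have hG' : ContDiffOn ℝ (⊤ : ℕ∞) (fderiv ℝ G) Dset := hGs.fderiv_of_isOpen hD (by simp)
  have hexpFs : ContDiffOn ℝ (⊤ : ℕ∞) (fun q => Real.exp (F q)) Dset :=
    Real.contDiff_exp.comp_contDiffOn hFs
  have hUs : ContDiffOn ℝ (⊤ : ℕ∞) U Dset := hGs.add hexpFs
  have hU' : ContDiffOn ℝ (⊤ : ℕ∞) (fderiv ℝ U) Dset := hUs.fderiv_of_isOpen hD (by simp)
  -- the lift of `pdz S` is `G` on `Dset`
  have hSrep : ∀ q ∈ Dset, pdz S q.1 q.2.1 q.2.2 = G q := fun q hq =>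
    rep_z hD S F (fun _ _ => rfl) hq (smoothOn_diffAt hD hFs hq)
  -- the lift of `u` is `U` on `Dset`
  have hu_eq : ∀ q ∈ Dset, u q.1 q.2.1 q.2.2 = U q := by
    intro q hq
    rw [hu]
    simp only [hUdef]
    rw [hSrep q hq]
  have hz_u : ∀ q ∈ Dset, pdz u q.1 q.2.1 q.2.2 = fderiv ℝ U q (0, 0, 1) := fun q hq =>
    rep_z hD u U hu_eq hq (smoothOn_diffAt hD hUs hq)
  -- derivative of the exponential term
  have hexp_at : ∀ q ∈ Dset, HasFDerivAt (fun r => Real.exp (F r))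
      (Real.exp (F q) • fderiv ℝ F q) q := fun q hq =>
    (Real.hasDerivAt_exp (F q)).comp_hasFDerivAt q (smoothOn_diffAt hD hFs hq).hasFDerivAt
  have hU_fd : ∀ q ∈ Dset, fderiv ℝ U q = fderiv ℝ G q + Real.exp (F q) • fderiv ℝ F q :=
    fun q hq => ((smoothOn_diffAt hD hGs hq).hasFDerivAt.add (hexp_at q hq)).fderiv
  -- the first-order equation, in lifted form, valid on all of `Dset`
  have hA1B1 : Set.EqOn (fun q => fderiv ℝ G q v)
      (fun q => Real.exp (F q) * fderiv ℝ F q v) Dset := by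
    intro q hq
    have h1 : pdv (pdz S) q.1 q.2.1 q.2.2 = fderiv ℝ G q v :=
      hrep (pdz S) G hSrep q hq (smoothOn_diffAt hD hGs hq)
    have h2 : pdv S q.1 q.2.1 q.2.2 = fderiv ℝ F q v :=
      hrep S F (fun _ _ => rfl) q hq (smoothOn_diffAt hD hFs hq)
    simp only
    rw [← h1, ← h2, heq q hq]
  intro p hp
  -- differentiability facts at `p`
  have dF : DifferentiableAt ℝ F p := smoothOn_diffAt hD hFs hp
  have dG : DifferentiableAt ℝ G p := smoothOn_diffAt hD hGs hp
  have dF' : DifferentiableAt ℝ (fderiv ℝ F) p := smoothOn_diffAt hD hF' hp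
  have dG' : DifferentiableAt ℝ (fderiv ℝ G) p := smoothOn_diffAt hD hG' hp
  have dU' : DifferentiableAt ℝ (fderiv ℝ U) p := smoothOn_diffAt hD hU' hp
  have dexp : DifferentiableAt ℝ (fun q => Real.exp (F q)) p := (hexp_at p hp).differentiableAt
  have dFw : ∀ w : ℝ × ℝ × ℝ, DifferentiableAt ℝ (fun q => fderiv ℝ F q w) p :=
    fun w => dF'.clm_apply (differentiableAt_const _)
  have dGw : ∀ w : ℝ × ℝ × ℝ, DifferentiableAt ℝ (fun q => fderiv ℝ G q w) p :=
    fun w => dG'.clm_apply (differentiableAt_const _)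
  -- symmetry of second derivatives
  have hsymF : IsSymmSndFDerivAt ℝ F p :=
    (hFs.contDiffAt (hD.mem_nhds hp)).isSymmSndFDerivAt
      (by simp; exact WithTop.coe_le_coe.mpr (le_top : (2 : ℕ∞) ≤ ⊤))
  have hsymG : IsSymmSndFDerivAt ℝ G p :=
    (hGs.contDiffAt (hD.mem_nhds hp)).isSymmSndFDerivAt
      (by simp; exact WithTop.coe_le_coe.mpr (le_top : (2 : ℕ∞) ≤ ⊤))
  -- abbreviations
  set a : ℝ := fderiv ℝ F p v with ha
  set c : ℝ := fderiv ℝ F p (0, 0, 1) with hc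
  set ee : ℝ := Real.exp (F p) with hee
  -- value of fderiv G p v
  have hGv : fderiv ℝ G p v = ee * a := hA1B1 hp
  -- X = fderiv (fun q => fderiv F q v) p (0,0,1) = ee * a
  have hX : fderiv ℝ (fun q => fderiv ℝ F q v) p (0, 0, 1) = ee * a := by
    rw [fderiv_clm_apply_const dF', hsymF.eq, ← fderiv_clm_apply_const dF']
    exact hGv
  -- LHS main term
  have hLHS : pdv (pdz u) p.1 p.2.1 p.2.2
      = fderiv ℝ (fun q => fderiv ℝ U q (0, 0, 1)) p v := by
    refine hrep (pdz u) (fun q => fderiv ℝ U q (0, 0, 1)) hz_u p hp ?_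
    exact dU'.clm_apply (differentiableAt_const _)
  have hVW : Set.EqOn (fun q => fderiv ℝ U q (0, 0, 1))
      (fun q => fderiv ℝ G q (0, 0, 1) + Real.exp (F q) * fderiv ℝ F q (0, 0, 1)) Dset := by
    intro q hq
    simp only
    rw [hU_fd q hq]
    simp
  have hfdVW : fderiv ℝ (fun q => fderiv ℝ U q (0, 0, 1)) p
      = fderiv ℝ (fun q => fderiv ℝ G q (0, 0, 1)
          + Real.exp (F q) * fderiv ℝ F q (0, 0, 1)) p :=
    (Filter.eventuallyEq_of_mem (hD.mem_nhds hp) hVW).fderiv_eq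
  -- T1
  have hAB : fderiv ℝ (fun q => fderiv ℝ G q v) p
      = fderiv ℝ (fun q => Real.exp (F q) * fderiv ℝ F q v) p :=
    (Filter.eventuallyEq_of_mem (hD.mem_nhds hp) hA1B1).fderiv_eq
  have hT1 : fderiv ℝ (fun q => fderiv ℝ G q (0, 0, 1)) p v = ee * (ee * a) + a * (ee * c) := by
    rw [fderiv_clm_apply_const dG', hsymG.eq, ← fderiv_clm_apply_const dG', hAB,
      fderiv_fun_mul dexp (dFw v)]
    rw [(hexp_at p hp).fderiv]
    simp only [ContinuousLinearMap.add_apply, ContinuousLinearMap.smul_apply, smul_eq_mul]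
    rw [hX]
  have hT2 : fderiv ℝ (fun q => Real.exp (F q) * fderiv ℝ F q (0, 0, 1)) p v
      = ee * (ee * a) + c * (ee * a) := by
    rw [fderiv_fun_mul dexp (dFw (0, 0, 1))]
    rw [(hexp_at p hp).fderiv]
    simp only [ContinuousLinearMap.add_apply, ContinuousLinearMap.smul_apply, smul_eq_mul]
    rw [show (fun q => fderiv ℝ F q (0, 0, 1)) = G from rfl, hGv]
  -- RHS pieces
  have hu_p : u p.1 p.2.1 p.2.2 = c + ee := by
    rw [hu_eq p hp, hUdef]
  have hpdvu : pdv u p.1 p.2.1 p.2.2 = ee * a + ee * a := by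
    rw [hrep u U hu_eq p hp (smoothOn_diffAt hD hUs hp), hU_fd p hp]
    simp only [ContinuousLinearMap.add_apply, ContinuousLinearMap.smul_apply, smul_eq_mul]
    rw [hGv]
  rw [hLHS, hfdVW]
  rw [fderiv_fun_add (dGw (0, 0, 1)) (dexp.fun_mul (dFw (0, 0, 1)))]
  simp only [ContinuousLinearMap.add_apply]
  rw [hT1, hT2, hu_p, hpdvu]
  ring

end Aux

/-- The Bäcklund transformation for the over-determined system `u_{xz} = u uₓ`,
`u_{yz} = u uᵧ`: if a smooth `S` on an open `D ⊆ ℝ³` solves `S_{xz} = e^S Sₓ`,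
`S_{yz} = e^S Sᵧ`, then `u = S_z + e^S` solves `u_{xz} = u uₓ`, `u_{yz} = u uᵧ` on `D`. -/
theorem overdetermined_backlund (D : Set (ℝ × ℝ × ℝ)) (hD : IsOpen D)
    (S : ℝ → ℝ → ℝ → ℝ)
    (hS : ContDiffOn ℝ (⊤ : ℕ∞) (fun p : ℝ × ℝ × ℝ => S p.1 p.2.1 p.2.2) D)
    (heq₁ : ∀ p ∈ D, pdx (pdz S) p.1 p.2.1 p.2.2
        = Real.exp (S p.1 p.2.1 p.2.2) * pdx S p.1 p.2.1 p.2.2)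
    (heq₂ : ∀ p ∈ D, pdy (pdz S) p.1 p.2.1 p.2.2
        = Real.exp (S p.1 p.2.1 p.2.2) * pdy S p.1 p.2.1 p.2.2)
    (u : ℝ → ℝ → ℝ → ℝ)
    (hu : u = fun x y z => pdz S x y z + Real.exp (S x y z)) :
    (∀ p ∈ D, pdx (pdz u) p.1 p.2.1 p.2.2
        = u p.1 p.2.1 p.2.2 * pdx u p.1 p.2.1 p.2.2) ∧
    (∀ p ∈ D, pdy (pdz u) p.1 p.2.1 p.2.2
        = u p.1 p.2.1 p.2.2 * pdy u p.1 p.2.1 p.2.2) := by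
  constructor
  · exact backlund_key hD S hS (1, 0, 0) pdx
      (fun f G hfG p hp hG => rep_x hD f G hfG hp hG) heq₁ u hu
  · exact backlund_key hD S hS (0, 1, 0) pdy
      (fun f G hfG p hp hG => rep_y hD f G hfG hp hG) heq₂ u hu
end
end

section
/- Let D ⊆ ℝ³ be open with coordinates (x, y, z) and let S : D → ℝ be a smooth solution of ∂_x∂_z S = e^S ∂_x S and ∂_y∂_z S = e^S ∂_y S with ∂_x S < 0 and ∂_y S < 0 on D. Define P := S − log(−∂_x S) and Q := S − log(−∂_y S). Then on D: (i) ∂_z P = ∂_z Q; (ii) e^Q ∂_y P = e^P ∂_x Q; (iii) ∂_x∂_z P = 0; and (iv) ∂_y∂_z P = 0. -/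
noncomputable section

open Real

private lemma hasDerivAt_mk1 (y z x : ℝ) :
    HasDerivAt (fun t : ℝ => ((t, y, z) : ℝ × ℝ × ℝ)) ((1, 0, 0) : ℝ × ℝ × ℝ) x :=
  HasDerivAt.prodMk (hasDerivAt_id x) (hasDerivAt_const x (y, z))

private lemma hasDerivAt_mk2 (x z y : ℝ) :
    HasDerivAt (fun t : ℝ => ((x, t, z) : ℝ × ℝ × ℝ)) ((0, 1, 0) : ℝ × ℝ × ℝ) y :=
  HasDerivAt.prodMk (hasDerivAt_const y x) (HasDerivAt.prodMk (hasDerivAt_id y) (hasDerivAt_const y z))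

private lemma hasDerivAt_mk3 (x y z : ℝ) :
    HasDerivAt (fun t : ℝ => ((x, y, t) : ℝ × ℝ × ℝ)) ((0, 0, 1) : ℝ × ℝ × ℝ) z :=
  HasDerivAt.prodMk (hasDerivAt_const z x) (HasDerivAt.prodMk (hasDerivAt_const z y) (hasDerivAt_id z))

private lemma sec1 {G : ℝ × ℝ × ℝ → ℝ} {G' : ℝ × ℝ × ℝ →L[ℝ] ℝ} {x y z : ℝ}
    (h : HasFDerivAt G G' (x, y, z)) :
    HasDerivAt (fun t => G (t, y, z)) (G' (1, 0, 0)) x :=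
  h.comp_hasDerivAt x (hasDerivAt_mk1 y z x)

private lemma sec2 {G : ℝ × ℝ × ℝ → ℝ} {G' : ℝ × ℝ × ℝ →L[ℝ] ℝ} {x y z : ℝ}
    (h : HasFDerivAt G G' (x, y, z)) :
    HasDerivAt (fun t => G (x, t, z)) (G' (0, 1, 0)) y :=
  h.comp_hasDerivAt y (hasDerivAt_mk2 x z y)

private lemma sec3 {G : ℝ × ℝ × ℝ → ℝ} {G' : ℝ × ℝ × ℝ →L[ℝ] ℝ} {x y z : ℝ}
    (h : HasFDerivAt G G' (x, y, z)) :
    HasDerivAt (fun t => G (x, y, t)) (G' (0, 0, 1)) z :=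
  h.comp_hasDerivAt z (hasDerivAt_mk3 x y z)

/-- The other projection of the Bäcklund system `S_{xz} = e^S Sₓ`, `S_{yz} = e^S Sᵧ`:
with `Sₓ < 0`, `Sᵧ < 0`, the functions `P = S − log(−Sₓ)` and `Q = S − log(−Sᵧ)` satisfy
`P_z = Q_z`, `e^Q P_y = e^P Qₓ`, `P_{xz} = 0` and `P_{yz} = 0`. -/
theorem overdetermined_backlund_other_side (D : Set (ℝ × ℝ × ℝ)) (hD : IsOpen D)
    (S : ℝ → ℝ → ℝ → ℝ)
    (hS : ContDiffOn ℝ (⊤ : ℕ∞) (fun p : ℝ × ℝ × ℝ => S p.1 p.2.1 p.2.2) D)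
    (hSx : ∀ p ∈ D, pdx S p.1 p.2.1 p.2.2 < 0)
    (hSy : ∀ p ∈ D, pdy S p.1 p.2.1 p.2.2 < 0)
    (heq₁ : ∀ p ∈ D, pdx (pdz S) p.1 p.2.1 p.2.2
        = Real.exp (S p.1 p.2.1 p.2.2) * pdx S p.1 p.2.1 p.2.2)
    (heq₂ : ∀ p ∈ D, pdy (pdz S) p.1 p.2.1 p.2.2
        = Real.exp (S p.1 p.2.1 p.2.2) * pdy S p.1 p.2.1 p.2.2)
    (P Q : ℝ → ℝ → ℝ → ℝ)
    (hP : P = fun x y z => S x y z - Real.log (-(pdx S x y z)))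
    (hQ : Q = fun x y z => S x y z - Real.log (-(pdy S x y z))) :
    (∀ p ∈ D, pdz P p.1 p.2.1 p.2.2 = pdz Q p.1 p.2.1 p.2.2) ∧
    (∀ p ∈ D, Real.exp (Q p.1 p.2.1 p.2.2) * pdy P p.1 p.2.1 p.2.2
        = Real.exp (P p.1 p.2.1 p.2.2) * pdx Q p.1 p.2.1 p.2.2) ∧
    (∀ p ∈ D, pdx (pdz P) p.1 p.2.1 p.2.2 = 0) ∧
    (∀ p ∈ D, pdy (pdz P) p.1 p.2.1 p.2.2 = 0) := by
  subst hP hQ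
  set F : ℝ × ℝ × ℝ → ℝ := fun p => S p.1 p.2.1 p.2.2 with hFdef
  -- basic differentiability facts
  have hdiff : ∀ q ∈ D, HasFDerivAt F (fderiv ℝ F q) q := fun q hq =>
    ((hS.contDiffAt (hD.mem_nhds hq)).differentiableAt (by simp)).hasFDerivAt
  have hF' : ContDiffOn ℝ (⊤ : ℕ∞) (fun q => fderiv ℝ F q) D := hS.fderiv_of_isOpen hD (by simp)
  have hdiff' : ∀ q ∈ D, HasFDerivAt (fun q => fderiv ℝ F q) (fderiv ℝ (fderiv ℝ F) q) q :=
    fun q hq => ((hF'.contDiffAt (hD.mem_nhds hq)).differentiableAt (by simp)).hasFDerivAt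
  -- directional derivatives of the first derivative
  have hdirv : ∀ q ∈ D, ∀ v : ℝ × ℝ × ℝ, HasFDerivAt (fun r => fderiv ℝ F r v)
      ((ContinuousLinearMap.apply ℝ ℝ v).comp (fderiv ℝ (fderiv ℝ F) q)) q :=
    fun q hq v => (ContinuousLinearMap.apply ℝ ℝ v).hasFDerivAt.comp q (hdiff' q hq)
  have happ : ∀ q (v w : ℝ × ℝ × ℝ),
      ((ContinuousLinearMap.apply ℝ ℝ v).comp (fderiv ℝ (fderiv ℝ F) q)) w
        = fderiv ℝ (fderiv ℝ F) q w v := fun q v w => rfl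
  -- symmetry of the second derivative
  have hsymm : ∀ q ∈ D, ∀ v w : ℝ × ℝ × ℝ,
      fderiv ℝ (fderiv ℝ F) q v w = fderiv ℝ (fderiv ℝ F) q w v := by
    intro q hq v w
    refine second_derivative_symmetric_of_eventually (f := F) ?_ (hdiff' q hq) v w
    filter_upwards [hD.mem_nhds hq] with r hr using hdiff r hr
  -- the partial derivatives of S expressed through fderiv
  have hSx' : ∀ x y z, (x, y, z) ∈ D → pdx S x y z = fderiv ℝ F (x, y, z) (1, 0, 0) :=
    fun x y z h => (sec1 (hdiff _ h)).deriv
  have hSy' : ∀ x y z, (x, y, z) ∈ D → pdy S x y z = fderiv ℝ F (x, y, z) (0, 1, 0) :=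
    fun x y z h => (sec2 (hdiff _ h)).deriv
  have hSz' : ∀ x y z, (x, y, z) ∈ D → pdz S x y z = fderiv ℝ F (x, y, z) (0, 0, 1) :=
    fun x y z h => (sec3 (hdiff _ h)).deriv
  -- neighbourhood membership along coordinate lines
  have memX : ∀ x y z, (x, y, z) ∈ D → ∀ᶠ t in nhds x, ((t, y, z) : ℝ × ℝ × ℝ) ∈ D :=
    fun x y z h =>
      (hasDerivAt_mk1 y z x).continuousAt.preimage_mem_nhds (hD.mem_nhds h)
  have memY : ∀ x y z, (x, y, z) ∈ D → ∀ᶠ t in nhds y, ((x, t, z) : ℝ × ℝ × ℝ) ∈ D :=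
    fun x y z h =>
      (hasDerivAt_mk2 x z y).continuousAt.preimage_mem_nhds (hD.mem_nhds h)
  have memZ : ∀ x y z, (x, y, z) ∈ D → ∀ᶠ t in nhds z, ((x, y, t) : ℝ × ℝ × ℝ) ∈ D :=
    fun x y z h =>
      (hasDerivAt_mk3 x y z).continuousAt.preimage_mem_nhds (hD.mem_nhds h)
  -- mixed second partials:  A e1 e3 = e^S·Sx  and  A e2 e3 = e^S·Sy
  have hK1 : ∀ x y z, (x, y, z) ∈ D →
      fderiv ℝ (fderiv ℝ F) (x, y, z) (1, 0, 0) (0, 0, 1)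
        = Real.exp (F (x, y, z)) * fderiv ℝ F (x, y, z) (1, 0, 0) := by
    intro x y z h
    have h1 : pdx (pdz S) x y z
        = fderiv ℝ (fderiv ℝ F) (x, y, z) (1, 0, 0) (0, 0, 1) := by
      have hev : (fun t => pdz S t y z) =ᶠ[nhds x]
          fun t => fderiv ℝ F (t, y, z) (0, 0, 1) := by
        filter_upwards [memX x y z h] with t ht using hSz' t y z ht
      have := (sec1 (hdirv _ h (0, 0, 1))).congr_of_eventuallyEq hev
      rw [show pdx (pdz S) x y z = deriv (fun t => pdz S t y z) x from rfl, this.deriv,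
        happ]
    have := heq₁ (x, y, z) h
    rw [h1, hSx' x y z h] at this
    exact this
  have hK2 : ∀ x y z, (x, y, z) ∈ D →
      fderiv ℝ (fderiv ℝ F) (x, y, z) (0, 1, 0) (0, 0, 1)
        = Real.exp (F (x, y, z)) * fderiv ℝ F (x, y, z) (0, 1, 0) := by
    intro x y z h
    have h1 : pdy (pdz S) x y z
        = fderiv ℝ (fderiv ℝ F) (x, y, z) (0, 1, 0) (0, 0, 1) := by
      have hev : (fun t => pdz S x t z) =ᶠ[nhds y]
          fun t => fderiv ℝ F (x, t, z) (0, 0, 1) := by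
        filter_upwards [memY x y z h] with t ht using hSz' x t z ht
      have := (sec2 (hdirv _ h (0, 0, 1))).congr_of_eventuallyEq hev
      rw [show pdy (pdz S) x y z = deriv (fun t => pdz S x t z) y from rfl, this.deriv,
        happ]
    have := heq₂ (x, y, z) h
    rw [h1, hSy' x y z h] at this
    exact this
  -- the value of P_z and Q_z
  have hPz : ∀ x y z, (x, y, z) ∈ D →
      pdz (fun x y z => S x y z - Real.log (-(pdx S x y z))) x y z
        = fderiv ℝ F (x, y, z) (0, 0, 1) - Real.exp (F (x, y, z)) := by
    intro x y z h
    have ha : fderiv ℝ F (x, y, z) (1, 0, 0) < 0 := by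
      have := hSx (x, y, z) h; rwa [hSx' x y z h] at this
    have hg : HasDerivAt (fun t => fderiv ℝ F (x, y, t) (1, 0, 0))
        (fderiv ℝ (fderiv ℝ F) (x, y, z) (0, 0, 1) (1, 0, 0)) z := by
      have := sec3 (hdirv _ h (1, 0, 0)); rwa [happ] at this
    have hlog : HasDerivAt (fun t => Real.log (-(fderiv ℝ F (x, y, t) (1, 0, 0))))
        ((-(fderiv ℝ (fderiv ℝ F) (x, y, z) (0, 0, 1) (1, 0, 0)))
          / (-(fderiv ℝ F (x, y, z) (1, 0, 0)))) z :=
      hg.neg.log (by exact neg_ne_zero.mpr (ne_of_lt ha))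
    have htot := (sec3 (hdiff _ h)).sub hlog
    have hev : (fun t => S x y t - Real.log (-(pdx S x y t))) =ᶠ[nhds z]
        fun t => F (x, y, t) - Real.log (-(fderiv ℝ F (x, y, t) (1, 0, 0))) := by
      filter_upwards [memZ x y z h] with t ht
      rw [hSx' x y t ht]
    have := (htot.congr_of_eventuallyEq hev).deriv
    rw [show pdz (fun x y z => S x y z - Real.log (-(pdx S x y z))) x y z
        = deriv (fun t => S x y t - Real.log (-(pdx S x y t))) z from rfl, this,
      hsymm _ h (0, 0, 1) (1, 0, 0), hK1 x y z h, neg_div_neg_eq,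
      mul_div_assoc, div_self (ne_of_lt ha), mul_one]
  have hQz : ∀ x y z, (x, y, z) ∈ D →
      pdz (fun x y z => S x y z - Real.log (-(pdy S x y z))) x y z
        = fderiv ℝ F (x, y, z) (0, 0, 1) - Real.exp (F (x, y, z)) := by
    intro x y z h
    have hb : fderiv ℝ F (x, y, z) (0, 1, 0) < 0 := by
      have := hSy (x, y, z) h; rwa [hSy' x y z h] at this
    have hg : HasDerivAt (fun t => fderiv ℝ F (x, y, t) (0, 1, 0))
        (fderiv ℝ (fderiv ℝ F) (x, y, z) (0, 0, 1) (0, 1, 0)) z := by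
      have := sec3 (hdirv _ h (0, 1, 0)); rwa [happ] at this
    have hlog : HasDerivAt (fun t => Real.log (-(fderiv ℝ F (x, y, t) (0, 1, 0))))
        ((-(fderiv ℝ (fderiv ℝ F) (x, y, z) (0, 0, 1) (0, 1, 0)))
          / (-(fderiv ℝ F (x, y, z) (0, 1, 0)))) z :=
      hg.neg.log (by exact neg_ne_zero.mpr (ne_of_lt hb))
    have htot := (sec3 (hdiff _ h)).sub hlog
    have hev : (fun t => S x y t - Real.log (-(pdy S x y t))) =ᶠ[nhds z]
        fun t => F (x, y, t) - Real.log (-(fderiv ℝ F (x, y, t) (0, 1, 0))) := by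
      filter_upwards [memZ x y z h] with t ht
      rw [hSy' x y t ht]
    have := (htot.congr_of_eventuallyEq hev).deriv
    rw [show pdz (fun x y z => S x y z - Real.log (-(pdy S x y z))) x y z
        = deriv (fun t => S x y t - Real.log (-(pdy S x y t))) z from rfl, this,
      hsymm _ h (0, 0, 1) (0, 1, 0), hK2 x y z h, neg_div_neg_eq,
      mul_div_assoc, div_self (ne_of_lt hb), mul_one]
  refine ⟨?_, ?_, ?_, ?_⟩
  · rintro ⟨x, y, z⟩ h
    rw [hPz x y z h, hQz x y z h]
  · -- e^Q P_y = e^P Q_x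
    rintro ⟨x, y, z⟩ h
    have ha : fderiv ℝ F (x, y, z) (1, 0, 0) < 0 := by
      have := hSx (x, y, z) h; rwa [hSx' x y z h] at this
    have hb : fderiv ℝ F (x, y, z) (0, 1, 0) < 0 := by
      have := hSy (x, y, z) h; rwa [hSy' x y z h] at this
    -- P_y
    have hgP : HasDerivAt (fun t => fderiv ℝ F (x, t, z) (1, 0, 0))
        (fderiv ℝ (fderiv ℝ F) (x, y, z) (0, 1, 0) (1, 0, 0)) y := by
      have := sec2 (hdirv _ h (1, 0, 0)); rwa [happ] at this
    have hlogP : HasDerivAt (fun t => Real.log (-(fderiv ℝ F (x, t, z) (1, 0, 0))))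
        ((-(fderiv ℝ (fderiv ℝ F) (x, y, z) (0, 1, 0) (1, 0, 0)))
          / (-(fderiv ℝ F (x, y, z) (1, 0, 0)))) y :=
      hgP.neg.log (by exact neg_ne_zero.mpr (ne_of_lt ha))
    have hevP : (fun t => S x t z - Real.log (-(pdx S x t z))) =ᶠ[nhds y]
        fun t => F (x, t, z) - Real.log (-(fderiv ℝ F (x, t, z) (1, 0, 0))) := by
      filter_upwards [memY x y z h] with t ht
      rw [hSx' x t z ht]
    have hPy : pdy (fun x y z => S x y z - Real.log (-(pdx S x y z))) x y z
        = fderiv ℝ F (x, y, z) (0, 1, 0)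
          - fderiv ℝ (fderiv ℝ F) (x, y, z) (0, 1, 0) (1, 0, 0)
            / fderiv ℝ F (x, y, z) (1, 0, 0) := by
      have htot := ((sec2 (hdiff _ h)).sub hlogP).congr_of_eventuallyEq hevP
      rw [show pdy (fun x y z => S x y z - Real.log (-(pdx S x y z))) x y z
          = deriv (fun t => S x t z - Real.log (-(pdx S x t z))) y from rfl, htot.deriv,
        neg_div_neg_eq]
    -- Q_x
    have hgQ : HasDerivAt (fun t => fderiv ℝ F (t, y, z) (0, 1, 0))
        (fderiv ℝ (fderiv ℝ F) (x, y, z) (1, 0, 0) (0, 1, 0)) x := by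
      have := sec1 (hdirv _ h (0, 1, 0)); rwa [happ] at this
    have hlogQ : HasDerivAt (fun t => Real.log (-(fderiv ℝ F (t, y, z) (0, 1, 0))))
        ((-(fderiv ℝ (fderiv ℝ F) (x, y, z) (1, 0, 0) (0, 1, 0)))
          / (-(fderiv ℝ F (x, y, z) (0, 1, 0)))) x :=
      hgQ.neg.log (by exact neg_ne_zero.mpr (ne_of_lt hb))
    have hevQ : (fun t => S t y z - Real.log (-(pdy S t y z))) =ᶠ[nhds x]
        fun t => F (t, y, z) - Real.log (-(fderiv ℝ F (t, y, z) (0, 1, 0))) := by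
      filter_upwards [memX x y z h] with t ht
      rw [hSy' t y z ht]
    have hQx : pdx (fun x y z => S x y z - Real.log (-(pdy S x y z))) x y z
        = fderiv ℝ F (x, y, z) (1, 0, 0)
          - fderiv ℝ (fderiv ℝ F) (x, y, z) (1, 0, 0) (0, 1, 0)
            / fderiv ℝ F (x, y, z) (0, 1, 0) := by
      have htot := ((sec1 (hdiff _ h)).sub hlogQ).congr_of_eventuallyEq hevQ
      rw [show pdx (fun x y z => S x y z - Real.log (-(pdy S x y z))) x y z
          = deriv (fun t => S t y z - Real.log (-(pdy S t y z))) x from rfl, htot.deriv,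
        neg_div_neg_eq]
    have hPval : S x y z - Real.log (-(pdx S x y z))
        = F (x, y, z) - Real.log (-(fderiv ℝ F (x, y, z) (1, 0, 0))) := by
      rw [hSx' x y z h]
    have hQval : S x y z - Real.log (-(pdy S x y z))
        = F (x, y, z) - Real.log (-(fderiv ℝ F (x, y, z) (0, 1, 0))) := by
      rw [hSy' x y z h]
    have key : ∀ a b m E : ℝ, a < 0 → b < 0 →
        E / (-b) * (b - m / a) = E / (-a) * (a - m / b) := by
      intro a b m E ha' hb'
      have h1 : a ≠ 0 := ne_of_lt ha'
      have h2 : b ≠ 0 := ne_of_lt hb'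
      field_simp
    simp only [hPy, hQx, hPval, hQval]
    rw [hsymm _ h (0, 1, 0) (1, 0, 0), Real.exp_sub, Real.exp_sub,
      Real.exp_log (by linarith : (0:ℝ) < -(fderiv ℝ F (x, y, z) (1, 0, 0))),
      Real.exp_log (by linarith : (0:ℝ) < -(fderiv ℝ F (x, y, z) (0, 1, 0)))]
    exact key _ _ _ _ ha hb
  · -- P_{xz} = 0
    rintro ⟨x, y, z⟩ h
    have hev : (fun t => pdz (fun x y z => S x y z - Real.log (-(pdx S x y z))) t y z)
        =ᶠ[nhds x]
        fun t => fderiv ℝ F (t, y, z) (0, 0, 1) - Real.exp (F (t, y, z)) := by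
      filter_upwards [memX x y z h] with t ht using hPz t y z ht
    have h1 : HasDerivAt (fun t => fderiv ℝ F (t, y, z) (0, 0, 1))
        (fderiv ℝ (fderiv ℝ F) (x, y, z) (1, 0, 0) (0, 0, 1)) x := by
      have := sec1 (hdirv _ h (0, 0, 1)); rwa [happ] at this
    have h2 : HasDerivAt (fun t => Real.exp (F (t, y, z)))
        (Real.exp (F (x, y, z)) * fderiv ℝ F (x, y, z) (1, 0, 0)) x := by
      have := (sec1 (hdiff _ h)).exp
      exact this
    have htot := ((h1.sub h2).congr_of_eventuallyEq hev).deriv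
    rw [show pdx (pdz fun x y z => S x y z - Real.log (-(pdx S x y z))) x y z
        = deriv (fun t => pdz (fun x y z => S x y z - Real.log (-(pdx S x y z))) t y z) x
        from rfl, htot, hK1 x y z h, sub_self]
  · -- P_{yz} = 0
    rintro ⟨x, y, z⟩ h
    have hev : (fun t => pdz (fun x y z => S x y z - Real.log (-(pdx S x y z))) x t z)
        =ᶠ[nhds y]
        fun t => fderiv ℝ F (x, t, z) (0, 0, 1) - Real.exp (F (x, t, z)) := by
      filter_upwards [memY x y z h] with t ht using hPz x t z ht
    have h1 : HasDerivAt (fun t => fderiv ℝ F (x, t, z) (0, 0, 1))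
        (fderiv ℝ (fderiv ℝ F) (x, y, z) (0, 1, 0) (0, 0, 1)) y := by
      have := sec2 (hdirv _ h (0, 0, 1)); rwa [happ] at this
    have h2 : HasDerivAt (fun t => Real.exp (F (x, t, z)))
        (Real.exp (F (x, y, z)) * fderiv ℝ F (x, y, z) (0, 1, 0)) y := by
      have := (sec2 (hdiff _ h)).exp
      exact this
    have htot := ((h1.sub h2).congr_of_eventuallyEq hev).deriv
    rw [show pdy (pdz fun x y z => S x y z - Real.log (-(pdx S x y z))) x y z
        = deriv (fun t => pdz (fun x y z => S x y z - Real.log (-(pdx S x y z))) x t z) y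
        from rfl, htot, hK2 x y z h, sub_self]
end
end

section
/- Let w : ℝ → ℝ be a smooth function with w′(z) ≠ 0 for all z, let v : ℝ² → ℝ be smooth, and let D ⊆ ℝ³ be an open set on which v(x, y) ≠ w(z). Then the function u(x, y, z) := w″(z)/w′(z) + 2w′(z)/(v(x, y) − w(z)) is a solution of the over-determined system ∂_x∂_z u = u ∂_x u and ∂_y∂_z u = u ∂_y u on D. -/
noncomputable section

open Real

lemma key_aux (w : ℝ → ℝ) (hw : ContDiff ℝ (⊤ : ℕ∞) w) (hw' : ∀ z : ℝ, deriv w z ≠ 0)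
    (g : ℝ → ℝ) (hg : Continuous g) (x z : ℝ) (hgd : DifferentiableAt ℝ g x)
    (hne : g x ≠ w z) :
    deriv (fun t => deriv (fun s =>
        deriv (deriv w) s / deriv w s + 2 * deriv w s / (g t - w s)) z) x
      = (deriv (deriv w) z / deriv w z + 2 * deriv w z / (g x - w z))
        * deriv (fun t =>
            deriv (deriv w) z / deriv w z + 2 * deriv w z / (g t - w z)) x := by
  have hw0 : ContDiff ℝ (⊤ : ℕ∞) w := hw.of_le (by simp)
  have hdw : ContDiff ℝ (⊤ : ℕ∞) (deriv w) := (contDiff_infty_iff_deriv.mp hw0).2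
  have hdw2 : ContDiff ℝ (⊤ : ℕ∞) (deriv (deriv w)) := (contDiff_infty_iff_deriv.mp hdw).2
  set w1 := deriv w z with hw1def
  set w2 := deriv (deriv w) z with hw2def
  set w3 := deriv (deriv (deriv w)) z with hw3def
  set g' := deriv g x with hg'def
  set s := g x - w z with hsdef
  have hs : s ≠ 0 := sub_ne_zero.mpr hne
  set C : ℝ := (w3 * w1 - w2 * w2) / w1 ^ 2 with hCdef
  -- Step 1: the value of the z-derivative at points t with g t ≠ w z
  have step1 : ∀ t : ℝ, g t ≠ w z →
      deriv (fun s => deriv (deriv w) s / deriv w s + 2 * deriv w s / (g t - w s)) z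
        = C + (2 * w2 * (g t - w z) - 2 * w1 * (0 - w1)) / (g t - w z) ^ 2 := by
    intro t ht
    have hwz : HasDerivAt w w1 z := ((hw0.differentiable (by norm_num)) z).hasDerivAt
    have hwz2 : HasDerivAt (deriv w) w2 z := ((hdw.differentiable (by norm_num)) z).hasDerivAt
    have hwz3 : HasDerivAt (deriv (deriv w)) w3 z :=
      ((hdw2.differentiable (by norm_num)) z).hasDerivAt
    have hA : HasDerivAt (fun s => deriv (deriv w) s / deriv w s) C z := by
      exact hwz3.div hwz2 (hw' z)
    have hB : HasDerivAt (fun s => 2 * deriv w s / (g t - w s))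
        ((2 * w2 * (g t - w z) - 2 * w1 * (0 - w1)) / (g t - w z) ^ 2) z := by
      have hnum : HasDerivAt (fun s => 2 * deriv w s) (2 * w2) z := hwz2.const_mul 2
      have hden : HasDerivAt (fun s => g t - w s) (0 - w1) z :=
        (hasDerivAt_const z (g t)).sub hwz
      exact hnum.div hden (sub_ne_zero.mpr ht)
    exact (hA.add hB).deriv
  -- Step 2: eventual equality near x
  have hev : ∀ᶠ t in nhds x, g t ≠ w z := hg.continuousAt.eventually_ne hne
  have heq : (fun t => deriv (fun s =>
      deriv (deriv w) s / deriv w s + 2 * deriv w s / (g t - w s)) z)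
      =ᶠ[nhds x] fun t =>
        C + (2 * w2 * (g t - w z) - 2 * w1 * (0 - w1)) / (g t - w z) ^ 2 :=
    hev.mono fun t ht => step1 t ht
  rw [heq.deriv_eq]
  -- Step 3: compute the x-derivative of the explicit formula
  have h1 : HasDerivAt (fun t => g t - w z) g' x := hgd.hasDerivAt.sub_const _
  have hL : HasDerivAt (fun t =>
      C + (2 * w2 * (g t - w z) - 2 * w1 * (0 - w1)) / (g t - w z) ^ 2)
      ((2 * w2 * g' * s ^ 2 - (2 * w2 * s - 2 * w1 * (0 - w1)) * (2 * s ^ 1 * g'))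
        / (s ^ 2) ^ 2) x := by
    have hnum : HasDerivAt (fun t => 2 * w2 * (g t - w z) - 2 * w1 * (0 - w1))
        (2 * w2 * g') x := by
      simpa using ((h1.const_mul (2 * w2)).sub_const (2 * w1 * (0 - w1)))
    have hden : HasDerivAt (fun t => (g t - w z) ^ 2) (2 * s ^ 1 * g') x := by
      have h2 : HasDerivAt (fun t => (g t - w z) ^ 2) _ x := h1.pow 2
      simpa [hsdef] using h2
    have h3 : HasDerivAt (fun t => C + (2 * w2 * (g t - w z) - 2 * w1 * (0 - w1)) / (g t - w z) ^ 2) _ x :=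
      (hasDerivAt_const x C).add (hnum.div hden (pow_ne_zero 2 hs))
    simpa [← hsdef] using h3
  rw [hL.deriv]
  -- Step 4: compute pdx u
  have hR : HasDerivAt (fun t =>
      deriv (deriv w) z / deriv w z + 2 * deriv w z / (g t - w z))
      ((0 * s - 2 * w1 * g') / s ^ 2) x := by
    have : HasDerivAt (fun t => 2 * deriv w z / (g t - w z))
        ((0 * s - 2 * w1 * g') / s ^ 2) x :=
      (hasDerivAt_const x (2 * deriv w z)).div h1 hs
    have h4 : HasDerivAt (fun t => deriv (deriv w) z / deriv w z + 2 * deriv w z / (g t - w z)) _ x :=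
      (hasDerivAt_const x (deriv (deriv w) z / deriv w z)).add this
    simpa using h4
  rw [hR.deriv]
  -- Step 5: algebra
  have hw1 : w1 ≠ 0 := hw' z
  field_simp
  ring


/-- Solution formula from the joint differential invariant `w_{zz}/w_z + 2w_z/(v − w)`:
for smooth `w : ℝ → ℝ` with `w′ ≠ 0` and smooth `v : ℝ² → ℝ` with `v(x,y) ≠ w(z)` on an
open set `D ⊆ ℝ³`, the function `u = w″(z)/w′(z) + 2w′(z)/(v(x,y) − w(z))` solves the
over-determined system `u_{xz} = u uₓ`, `u_{yz} = u uᵧ` on `D`. -/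
theorem overdetermined_solution_formula (w : ℝ → ℝ) (hw : ContDiff ℝ (⊤ : ℕ∞) w)
    (hw' : ∀ z : ℝ, deriv w z ≠ 0)
    (v : ℝ → ℝ → ℝ) (hv : ContDiff ℝ (⊤ : ℕ∞) (fun p : ℝ × ℝ => v p.1 p.2))
    (D : Set (ℝ × ℝ × ℝ)) (hD : IsOpen D)
    (hvw : ∀ p ∈ D, v p.1 p.2.1 ≠ w p.2.2)
    (u : ℝ → ℝ → ℝ → ℝ)
    (hu : u = fun x y z => deriv (deriv w) z / deriv w z + 2 * deriv w z / (v x y - w z)) :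
    (∀ p ∈ D, pdx (pdz u) p.1 p.2.1 p.2.2
        = u p.1 p.2.1 p.2.2 * pdx u p.1 p.2.1 p.2.2) ∧
    (∀ p ∈ D, pdy (pdz u) p.1 p.2.1 p.2.2
        = u p.1 p.2.1 p.2.2 * pdy u p.1 p.2.1 p.2.2) := by
  subst hu
  have hvc : Continuous fun p : ℝ × ℝ => v p.1 p.2 := hv.continuous
  have hvd : Differentiable ℝ fun p : ℝ × ℝ => v p.1 p.2 := hv.differentiable (by simp)
  constructor <;> rintro ⟨x, y, z⟩ hp
  · have hg : Continuous (fun t => v t y) :=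
      hvc.comp (continuous_id.prodMk continuous_const)
    have hgd : DifferentiableAt ℝ (fun t => v t y) x :=
      by
        have hp2 : DifferentiableAt ℝ (fun t : ℝ => (t, y)) x :=
          differentiableAt_id.prodMk (differentiableAt_const y)
        have := (hvd (x, y)).comp x hp2; exact this
    simp only [pdx, pdz]
    exact key_aux w hw hw' (fun t => v t y) hg x z hgd (hvw _ hp)
  · have hg : Continuous (fun t => v x t) :=
      hvc.comp (continuous_const.prodMk continuous_id)
    have hgd : DifferentiableAt ℝ (fun t => v x t) y :=
      by have := (hvd (x, y)).comp y ((differentiableAt_const x).prodMk differentiableAt_id); exact this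
    simp only [pdy, pdz]
    exact key_aux w hw hw' (fun t => v x t) hg y z hgd (hvw _ hp)
end
end
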